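/- arXiv:2602.16340 — 2 statements merged into one kernel-verified Lean document; each statement's English description precedes it below -/
import Mathlib

section
/- Let c > 0 and g : [0,∞) → (0,∞) be measurable and locally essentially bounded. Suppose (1) e^{-ct}/g(t) → 0 as t → ∞; (2) there exists k ∈ [0, c) such that for every fixed u > 0, g(t-u)/g(t) → e^{ku} as t → ∞; (3) there exist M : (0,∞) → [0,∞) with ∫₀^∞ c e^{-cu} M(u) du < ∞ and t₀ ≥ 0 such that g(t-u)/g(t) ≤ M(u) for all t ≥ t₀ and 0 < u < t - t₀. Then A(g,c)(t)/g(t) → c/(c-k) as t → ∞, where A(g,c)(t) = ∫₀ᵗ c e^{-c(t-s)} g(s) ds. -/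
open MeasureTheory Filter

/-- Local essential boundedness on `[0, b]` for every `b`. -/
def LocEssBdd (g : ℝ → ℝ) : Prop :=
  ∀ b : ℝ, ∃ C : ℝ, ∀ᵐ t ∂(volume : Measure ℝ), t ∈ Set.Icc (0:ℝ) b → |g t| ≤ C

/-- The momentum (EMA) `A(g,c)(t) = ∫₀ᵗ c e^{-c(t-s)} g(s) ds`. -/
noncomputable def ema (c : ℝ) (g : ℝ → ℝ) (t : ℝ) : ℝ :=
  ∫ s in (0:ℝ)..t, c * Real.exp (-c * (t - s)) * g s

private lemma integral_exp_neg_mul_Ioi_zero {b : ℝ} (hb : 0 < b) :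
    ∫ u in Set.Ioi (0:ℝ), Real.exp (-b * u) = 1 / b := by
  have h : ∀ x ∈ Set.Ici (0:ℝ),
      HasDerivAt (fun u => -b⁻¹ * Real.exp (-b * u)) (Real.exp (-b * x)) x := by
    intro x _
    have h0 : HasDerivAt (fun u : ℝ => -b * u) (-b) x := by
      simpa using (hasDerivAt_id x).const_mul (-b)
    have h1 : HasDerivAt (fun u : ℝ => Real.exp (-b * u)) (Real.exp (-b * x) * -b) x :=
      (Real.hasDerivAt_exp (-b * x)).comp x h0
    have := h1.const_mul (-b⁻¹)
    refine this.congr_deriv ?_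
    rw [show -b⁻¹ * (Real.exp (-b * x) * -b) = Real.exp (-b * x) * (b⁻¹ * b) by ring,
      inv_mul_cancel₀ hb.ne', mul_one]
  have htop : Tendsto (fun u => -b⁻¹ * Real.exp (-b * u)) atTop (nhds 0) := by
    have hexp : Tendsto (fun u : ℝ => Real.exp (-b * u)) atTop (nhds 0) := by
      have hbt : Tendsto (fun u : ℝ => b * u) atTop atTop :=
        Tendsto.const_mul_atTop hb tendsto_id
      exact (Real.tendsto_exp_neg_atTop_nhds_zero.comp hbt).congr
        (fun u => by simp [Function.comp, neg_mul])
    simpa using hexp.const_mul (-b⁻¹)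
  have := integral_Ioi_of_hasDerivAt_of_tendsto' h (exp_neg_integrableOn_Ioi 0 hb) htop
  rw [this]; simp

/-- The integrand after the change of variables `u = t - s`. -/
private noncomputable def phi (c : ℝ) (g : ℝ → ℝ) (t u : ℝ) : ℝ :=
  c * Real.exp (-c * u) * g (t - u)

private lemma phi_meas {c : ℝ} {g : ℝ → ℝ} (hgm : Measurable g) (t : ℝ) :
    Measurable (phi c g t) :=
  (measurable_const.mul (Real.measurable_exp.comp (measurable_id.const_mul (-c)))).mul
    (hgm.comp (measurable_const.sub measurable_id))

private lemma ema_eq (c : ℝ) (g : ℝ → ℝ) (t : ℝ) :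
    ema c g t = ∫ u in (0:ℝ)..t, phi c g t u := by
  have h := intervalIntegral.integral_comp_sub_left (a := (0:ℝ)) (b := t) (phi c g t) t
  unfold ema phi at *
  simp only [sub_sub_cancel, sub_zero, sub_self] at h
  exact h

private lemma integrable_phi {c : ℝ} (hc : 0 < c) {g : ℝ → ℝ} (hgm : Measurable g)
    (hgb : LocEssBdd g) (t : ℝ) (ht : 0 ≤ t) :
    IntegrableOn (phi c g t) (Set.Icc 0 t) volume := by
  obtain ⟨C, hC⟩ := hgb t
  have hC' : ∀ᵐ s ∂(volume : Measure ℝ), s ∈ Set.Icc (0:ℝ) t → |g s| ≤ max C 0 :=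
    hC.mono fun s hs hmem => (hs hmem).trans (le_max_left _ _)
  have hae : ∀ᵐ u ∂(volume : Measure ℝ), (t - u) ∈ Set.Icc (0:ℝ) t → |g (t - u)| ≤ max C 0 :=
    (quasiMeasurePreserving_sub_left volume t).ae hC'
  apply Measure.integrableOn_of_bounded (M := c * max C 0)
    (measure_Icc_lt_top).ne (phi_meas hgm t).aestronglyMeasurable
  filter_upwards [ae_restrict_of_ae hae, ae_restrict_mem measurableSet_Icc] with u h1 h2
  have hmem : t - u ∈ Set.Icc (0:ℝ) t := ⟨by linarith [h2.2], by linarith [h2.1]⟩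
  have hb := h1 hmem
  have he1 : Real.exp (-c * u) ≤ 1 := by
    apply Real.exp_le_one_iff.2; nlinarith [h2.1]
  have : ‖phi c g t u‖ = c * Real.exp (-c * u) * |g (t - u)| := by
    unfold phi
    rw [Real.norm_eq_abs, abs_mul, abs_mul, abs_of_pos hc, abs_of_pos (Real.exp_pos _)]
  rw [this]
  calc c * Real.exp (-c * u) * |g (t - u)| ≤ c * 1 * max C 0 := by
        apply mul_le_mul (by nlinarith [Real.exp_pos (-c * u)]) hb (abs_nonneg _)
        positivity
    _ = c * max C 0 := by ring

/-- dominated-convergence momentum ratio: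
under the three conditions, `A(g,c)(t)/g(t) → c/(c-k)`. -/
theorem stmt6 (c : ℝ) (hc : 0 < c) (g : ℝ → ℝ) (hgm : Measurable g)
    (hgb : LocEssBdd g) (hgpos : ∀ t, 0 ≤ t → 0 < g t)
    (h1 : Tendsto (fun t => Real.exp (-c * t) / g t) atTop (nhds 0))
    (k : ℝ) (hk0 : 0 ≤ k) (hkc : k < c)
    (h2 : ∀ u : ℝ, 0 < u →
      Tendsto (fun t => g (t - u) / g t) atTop (nhds (Real.exp (k * u))))
    (M : ℝ → ℝ) (hMm : Measurable M) (hMnn : ∀ u, 0 < u → 0 ≤ M u)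
    (hMint : IntegrableOn (fun u => c * Real.exp (-c * u) * M u) (Set.Ioi (0:ℝ)))
    (t₀ : ℝ) (ht₀ : 0 ≤ t₀)
    (h3 : ∀ t, t₀ ≤ t → ∀ u, 0 < u → u < t - t₀ → g (t - u) / g t ≤ M u) :
    Tendsto (fun t => ema c g t / g t) atTop (nhds (c / (c - k))) := by
  have hck : 0 < c - k := sub_pos.2 hkc
  set F : ℝ → ℝ → ℝ := fun t u => Set.indicator (Set.Ioo 0 (t - t₀))
      (fun u => c * Real.exp (-c * u) * (g (t - u) / g t)) u with hF
  -- value of the limiting integral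
  have hIoiInt : ∫ u in Set.Ioi (0:ℝ), c * Real.exp (-c * u) * Real.exp (k * u)
      = c / (c - k) := by
    have heq : ∀ u : ℝ, c * Real.exp (-c * u) * Real.exp (k * u)
        = c * Real.exp (-(c - k) * u) := by
      intro u; rw [mul_assoc, ← Real.exp_add]; ring_nf
    simp_rw [heq]
    rw [MeasureTheory.integral_const_mul, integral_exp_neg_mul_Ioi_zero hck]
    field_simp
  -- Part A: dominated convergence
  have hA : Tendsto (fun t => ∫ u in Set.Ioi (0:ℝ), F t u) atTop (nhds (c / (c - k))) := by
    rw [← hIoiInt]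
    apply tendsto_integral_filter_of_dominated_convergence
      (bound := fun u => c * Real.exp (-c * u) * M u)
    · refine Eventually.of_forall fun t => ?_
      exact (((measurable_const.mul
          (Real.measurable_exp.comp (measurable_id.const_mul (-c)))).mul
          ((hgm.comp (measurable_const.sub measurable_id)).div_const _)).indicator
          measurableSet_Ioo).aestronglyMeasurable
    · filter_upwards [eventually_ge_atTop t₀] with t ht
      refine (ae_restrict_iff' measurableSet_Ioi).2 (Eventually.of_forall fun u hu => ?_)
      have hu0 : (0:ℝ) < u := hu
      by_cases hmem : u ∈ Set.Ioo 0 (t - t₀)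
      · have hgt : 0 < g t := hgpos t (ht₀.trans ht)
        have hgu : 0 < g (t - u) := hgpos _ (by linarith [hmem.2] : (0:ℝ) ≤ t - u)
        have hratio : g (t - u) / g t ≤ M u := h3 t ht u hu0 hmem.2
        rw [hF]
        simp only [Set.indicator_of_mem hmem]
        rw [Real.norm_eq_abs, abs_of_nonneg (by positivity)]
        have hrnn : 0 ≤ g (t - u) / g t := div_nonneg hgu.le hgt.le
        gcongr
      · rw [hF]
        simp only [Set.indicator_of_notMem hmem]
        simp only [norm_zero]
        have := hMnn u hu0
        positivity
    · exact hMint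
    · refine (ae_restrict_iff' measurableSet_Ioi).2 (Eventually.of_forall fun u hu => ?_)
      have hu0 : (0:ℝ) < u := hu
      have heq : ∀ᶠ t in atTop,
          c * Real.exp (-c * u) * (g (t - u) / g t) = F t u := by
        filter_upwards [eventually_gt_atTop (t₀ + u)] with t ht
        simp only [hF]
        exact (Set.indicator_of_mem
          (show u ∈ Set.Ioo 0 (t - t₀) from ⟨hu0, by linarith⟩)
          (fun u => c * Real.exp (-c * u) * (g (t - u) / g t))).symm
      exact Tendsto.congr' heq ((h2 u hu0).const_mul (c * Real.exp (-c * u)))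
  -- Part B: the tail tends to zero
  have hB : Tendsto (fun t => (∫ u in (t - t₀)..t, phi c g t u) / g t) atTop (nhds 0) := by
    obtain ⟨C, hC⟩ := hgb t₀
    set C' := max C 0 with hC'def
    have hC'0 : 0 ≤ C' := le_max_right _ _
    have hC' : ∀ᵐ s ∂(volume : Measure ℝ), s ∈ Set.Icc (0:ℝ) t₀ → |g s| ≤ C' :=
      hC.mono fun s hs hmem => (hs hmem).trans (le_max_left _ _)
    set K := c * Real.exp (c * t₀) * C' * t₀ with hK
    apply squeeze_zero_norm' (a := fun t => K * (Real.exp (-c * t) / g t))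
    · filter_upwards [eventually_ge_atTop t₀] with t ht
      have hgt : 0 < g t := hgpos t (ht₀.trans ht)
      have hnorm : ‖∫ u in (t - t₀)..t, phi c g t u‖
          ≤ (c * Real.exp (-c * (t - t₀)) * C') * t₀ := by
        rw [intervalIntegral.integral_of_le (by linarith)]
        have hb : ∀ᵐ u ∂(volume.restrict (Set.Ioc (t - t₀) t)),
            ‖phi c g t u‖ ≤ c * Real.exp (-c * (t - t₀)) * C' := by
          have hae : ∀ᵐ u ∂(volume : Measure ℝ),
              (t - u) ∈ Set.Icc (0:ℝ) t₀ → |g (t - u)| ≤ C' :=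
            (quasiMeasurePreserving_sub_left volume t).ae hC'
          filter_upwards [ae_restrict_of_ae hae, ae_restrict_mem measurableSet_Ioc]
            with u hu1 hu2
          have hmem : t - u ∈ Set.Icc (0:ℝ) t₀ :=
            ⟨by linarith [hu2.2], by linarith [hu2.1]⟩
          have hbb := hu1 hmem
          have hexp : Real.exp (-c * u) ≤ Real.exp (-c * (t - t₀)) := by
            apply Real.exp_le_exp.2; nlinarith [hu2.1]
          have : ‖phi c g t u‖ = c * Real.exp (-c * u) * |g (t - u)| := by
            unfold phi
            rw [Real.norm_eq_abs, abs_mul, abs_mul, abs_of_pos hc,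
              abs_of_pos (Real.exp_pos _)]
          rw [this]
          gcongr
        have := norm_setIntegral_le_of_norm_le_const_ae (μ := volume)
          (s := Set.Ioc (t - t₀) t) (f := phi c g t) measure_Ioc_lt_top hb
        calc ‖∫ u in Set.Ioc (t - t₀) t, phi c g t u‖
            ≤ (c * Real.exp (-c * (t - t₀)) * C') * (volume (Set.Ioc (t - t₀) t)).toReal :=
              this
          _ = (c * Real.exp (-c * (t - t₀)) * C') * t₀ := by
              rw [Real.volume_Ioc, ENNReal.toReal_ofReal (by linarith)]
              ring_nf
      have hKe : (c * Real.exp (-c * (t - t₀)) * C') * t₀ = K * Real.exp (-c * t) := by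
        rw [hK, show -c * (t - t₀) = c * t₀ + -c * t by ring, Real.exp_add]
        ring
      have h' : ‖∫ u in (t - t₀)..t, phi c g t u‖ ≤ K * Real.exp (-c * t) :=
        hnorm.trans_eq hKe
      rw [Real.norm_eq_abs] at h'
      rw [Real.norm_eq_abs, abs_div, abs_of_pos hgt]
      calc |∫ u in (t - t₀)..t, phi c g t u| / g t
          ≤ (K * Real.exp (-c * t)) / g t := (div_le_div_iff_of_pos_right hgt).2 h'
        _ = K * (Real.exp (-c * t) / g t) := mul_div_assoc _ _ _
    · have := h1.const_mul K
      simpa using this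
  -- eventual identity
  have key : ∀ᶠ t in atTop, ema c g t / g t
      = (∫ u in Set.Ioi (0:ℝ), F t u) + (∫ u in (t - t₀)..t, phi c g t u) / g t := by
    filter_upwards [eventually_ge_atTop t₀] with t ht
    have ht0 : (0:ℝ) ≤ t := ht₀.trans ht
    have htt0 : (0:ℝ) ≤ t - t₀ := by linarith
    have htt : t - t₀ ≤ t := by linarith
    have hi1 : IntervalIntegrable (phi c g t) volume 0 (t - t₀) := by
      apply MeasureTheory.IntegrableOn.intervalIntegrable
      rw [Set.uIcc_of_le htt0]
      exact (integrable_phi hc hgm hgb t ht0).mono_set (Set.Icc_subset_Icc le_rfl htt)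
    have hi2 : IntervalIntegrable (phi c g t) volume (t - t₀) t := by
      apply MeasureTheory.IntegrableOn.intervalIntegrable
      rw [Set.uIcc_of_le htt]
      exact (integrable_phi hc hgm hgb t ht0).mono_set (Set.Icc_subset_Icc htt0 le_rfl)
    rw [ema_eq, ← intervalIntegral.integral_add_adjacent_intervals hi1 hi2, add_div]
    congr 1
    calc (∫ u in (0:ℝ)..(t - t₀), phi c g t u) / g t
        = ∫ u in (0:ℝ)..(t - t₀), phi c g t u / g t :=
          (intervalIntegral.integral_div _ _).symm
      _ = ∫ u in Set.Ioc (0:ℝ) (t - t₀), phi c g t u / g t :=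
          intervalIntegral.integral_of_le htt0
      _ = ∫ u in Set.Ioo (0:ℝ) (t - t₀), phi c g t u / g t :=
          (setIntegral_congr_set Ioo_ae_eq_Ioc).symm
      _ = ∫ u in Set.Ioi (0:ℝ), F t u := by
          rw [hF]
          rw [MeasureTheory.integral_indicator measurableSet_Ioo,
            Measure.restrict_restrict measurableSet_Ioo,
            Set.inter_eq_self_of_subset_left Set.Ioo_subset_Ioi_self]
          apply setIntegral_congr_fun measurableSet_Ioo
          intro u _
          unfold phi
          simp [mul_div_assoc]
  have hfinal := hA.add hB
  rw [add_zero] at hfinal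
  exact Tendsto.congr' (key.mono fun t h => h.symm) hfinal
end

section
/- Let c > 0 and let g : [0,∞) → (0,∞) be locally absolutely continuous, differentiable almost everywhere, with -g'(t)/g(t) → k as t → ∞ (essential limit) for some k ∈ [0, c). Then A(g,c)(t)/g(t) → c/(c-k) as t → ∞, where A(g,c)(t) = ∫₀ᵗ c e^{-c(t-s)} g(s) ds. -/
open MeasureTheory Filter
open Set

lemma expFTC (lam a b : ℝ) :
    ∫ r in a..b, lam * Real.exp (lam * r) = Real.exp (lam * b) - Real.exp (lam * a) := by
  apply intervalIntegral.integral_eq_sub_of_hasDerivAt (fun r _ => ?_)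
  · exact (Continuous.intervalIntegrable (by fun_prop) a b)
  · simpa [mul_comm] using ((hasDerivAt_id r).const_mul lam).exp

lemma expInt (aa cc T t : ℝ) (haa : 0 < aa) :
    ∫ s in T..t, cc * Real.exp (-aa * (t - s)) = cc / aa * (1 - Real.exp (-aa * (t - T))) := by
  have h : ∀ s : ℝ, HasDerivAt (fun s => cc / aa * Real.exp (-aa * (t - s)))
      (cc * Real.exp (-aa * (t - s))) s := by
    intro s
    have h1 : HasDerivAt (fun s : ℝ => -aa * (t - s)) aa s := by
      simpa using ((hasDerivAt_id s).const_sub t).const_mul (-aa)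
    have := (h1.exp).const_mul (cc / aa)
    refine this.congr_deriv ?_
    field_simp
  rw [intervalIntegral.integral_eq_sub_of_hasDerivAt (fun s _ => h s)
    (Continuous.intervalIntegrable (by fun_prop) T t)]
  have : -aa * (t - t) = 0 := by ring
  rw [this, Real.exp_zero]
  ring

set_option linter.unnecessarySeqFocus false in
lemma ibp (g g' : ℝ → ℝ)
    (hg'int : ∀ a b : ℝ, IntervalIntegrable g' volume a b)
    (hAC : ∀ a b : ℝ, 0 ≤ a → a ≤ b → g b - g a = ∫ s in a..b, g' s)
    (lam a b : ℝ) (ha : 0 ≤ a) (hab : a ≤ b)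
    (hgi : IntervalIntegrable g volume a b) :
    g b * Real.exp (lam * b) - g a * Real.exp (lam * a)
      = ∫ s in a..b, (g' s + lam * g s) * Real.exp (lam * s) := by
  have hCcont : Continuous (fun r : ℝ => lam * Real.exp (lam * r)) := by fun_prop
  have hecont : Continuous (fun r : ℝ => Real.exp (lam * r)) := by fun_prop
  set μ := volume.restrict (Ioc a b) with hμ
  set S : Set (ℝ × ℝ) := {p : ℝ × ℝ | p.2 ≤ p.1} with hS
  have hSm : MeasurableSet S := measurableSet_le measurable_snd measurable_fst
  set F : ℝ × ℝ → ℝ := fun p => g' p.1 * (lam * Real.exp (lam * p.2)) with hF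
  have hFint : Integrable (S.indicator F) (μ.prod μ) := by
    refine Integrable.indicator ?_ hSm
    exact Integrable.mul_prod (hg'int a b).1 (hCcont.integrableOn_Ioc)
  -- Claim A
  have claimA : ∀ s ∈ Ioc a b,
      g' s * (Real.exp (lam * s) - Real.exp (lam * a)) = ∫ r, S.indicator F (s, r) ∂μ := by
    intro s hs
    have h1 : ∀ r : ℝ, S.indicator F (s, r)
        = (Iic s).indicator (fun r => g' s * (lam * Real.exp (lam * r))) r := by
      intro r
      by_cases h : r ≤ s <;> simp [hS, hF, indicator, h]
    simp_rw [h1]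
    rw [integral_indicator measurableSet_Iic, hμ, Measure.restrict_restrict measurableSet_Iic]
    have h2 : Iic s ∩ Ioc a b = Ioc a s := by
      ext x; simp only [mem_inter_iff, mem_Iic, mem_Ioc]
      constructor
      · rintro ⟨h3, h4, h5⟩; exact ⟨h4, h3⟩
      · rintro ⟨h3, h4⟩; exact ⟨h4, h3, h4.trans hs.2⟩
    rw [h2, ← intervalIntegral.integral_of_le hs.1.le, intervalIntegral.integral_const_mul,
      expFTC]
  -- Claim C
  have claimC : ∀ r ∈ Ioc a b,
      (∫ s, S.indicator F (s, r) ∂μ) = lam * Real.exp (lam * r) * (g b - g r) := by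
    intro r hr
    have h1 : ∀ s : ℝ, S.indicator F (s, r)
        = (Ici r).indicator (fun s => lam * Real.exp (lam * r) * g' s) s := by
      intro s
      by_cases h : r ≤ s <;> simp [hS, hF, indicator, h] <;> ring
    simp_rw [h1]
    rw [integral_indicator measurableSet_Ici, hμ, Measure.restrict_restrict measurableSet_Ici]
    have h2 : Ici r ∩ Ioc a b = Icc r b := by
      ext x; simp only [mem_inter_iff, mem_Ici, mem_Ioc, mem_Icc]
      constructor
      · rintro ⟨h3, h4, h5⟩; exact ⟨h3, h5⟩
      · rintro ⟨h3, h4⟩; exact ⟨h3, hr.1.trans_le h3, h4⟩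
    rw [h2, integral_Icc_eq_integral_Ioc, ← intervalIntegral.integral_of_le hr.2,
      intervalIntegral.integral_const_mul, ← hAC r b (ha.trans hr.1.le) hr.2]
  -- key Fubini identity
  have key : ∫ s in a..b, g' s * (Real.exp (lam * s) - Real.exp (lam * a))
      = ∫ r in a..b, lam * Real.exp (lam * r) * (g b - g r) := by
    rw [intervalIntegral.integral_of_le hab, intervalIntegral.integral_of_le hab]
    calc ∫ s in Ioc a b, g' s * (Real.exp (lam * s) - Real.exp (lam * a))
        = ∫ s, (∫ r, S.indicator F (s, r) ∂μ) ∂μ := by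
          refine setIntegral_congr_fun measurableSet_Ioc (fun s hs => claimA s hs)
      _ = ∫ r, (∫ s, S.indicator F (s, r) ∂μ) ∂μ := by
          exact integral_integral_swap hFint
      _ = ∫ r in Ioc a b, lam * Real.exp (lam * r) * (g b - g r) := by
          refine setIntegral_congr_fun measurableSet_Ioc (fun r hr => claimC r hr)
  -- integrabilities
  have hg'e : IntervalIntegrable (fun s => g' s * Real.exp (lam * s)) volume a b :=
    (hg'int a b).mul_continuousOn hecont.continuousOn
  have hge : IntervalIntegrable (fun s => g s * Real.exp (lam * s)) volume a b :=
    hgi.mul_continuousOn hecont.continuousOn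
  have hg'c : IntervalIntegrable (fun s => g' s * Real.exp (lam * a)) volume a b :=
    (hg'int a b).mul_continuousOn continuousOn_const
  have hg'd : IntervalIntegrable (fun s => g' s * (Real.exp (lam * s) - Real.exp (lam * a)))
      volume a b :=
    (hg'int a b).mul_continuousOn (hecont.continuousOn.sub continuousOn_const)
  -- assemble
  have e1 : ∫ s in a..b, g' s * Real.exp (lam * s)
      = (∫ s in a..b, g' s * Real.exp (lam * a))
        + ∫ s in a..b, g' s * (Real.exp (lam * s) - Real.exp (lam * a)) := by
    rw [← intervalIntegral.integral_add hg'c hg'd]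
    congr 1; ext s; ring
  have e2 : ∫ s in a..b, g' s * Real.exp (lam * a)
      = (g b - g a) * Real.exp (lam * a) := by
    rw [intervalIntegral.integral_mul_const, ← hAC a b ha hab]
  have e3 : ∫ r in a..b, lam * Real.exp (lam * r) * (g b - g r)
      = (Real.exp (lam * b) - Real.exp (lam * a)) * g b
        - lam * ∫ s in a..b, g s * Real.exp (lam * s) := by
    have h4 : ∀ r : ℝ, lam * Real.exp (lam * r) * (g b - g r)
        = lam * Real.exp (lam * r) * g b - lam * (g r * Real.exp (lam * r)) := by
      intro r; ring
    simp_rw [h4]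
    rw [intervalIntegral.integral_sub
      ((hCcont.intervalIntegrable a b).mul_const _)
      ((hge).const_mul lam),
      intervalIntegral.integral_mul_const, expFTC, intervalIntegral.integral_const_mul]
  have e4 : ∫ s in a..b, (g' s + lam * g s) * Real.exp (lam * s)
      = (∫ s in a..b, g' s * Real.exp (lam * s))
        + lam * ∫ s in a..b, g s * Real.exp (lam * s) := by
    rw [← intervalIntegral.integral_const_mul, ← intervalIntegral.integral_add hg'e
      (hge.const_mul lam)]
    congr 1; ext s; ring
  rw [e4, e1, e2, key, e3]; ring

set_option maxHeartbeats 1000000 in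
/-- asymptotic momentum–function ratio, subcritical case:
if `g > 0` is locally absolutely continuous with a.e. derivative `g'`,
and `-g'/g → k ∈ [0, c)` essentially, then `A(g,c)/g → c/(c-k)`. -/
theorem stmt7 (c : ℝ) (hc : 0 < c) (g g' : ℝ → ℝ)
    (hgpos : ∀ t, 0 ≤ t → 0 < g t)
    (hg'int : ∀ b : ℝ, IntervalIntegrable g' volume 0 b)
    (hAC : ∀ a b : ℝ, 0 ≤ a → a ≤ b → g b - g a = ∫ s in a..b, g' s)
    (hderiv : ∀ᵐ t ∂(volume : Measure ℝ), 0 ≤ t → HasDerivAt g (g' t) t)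
    (k : ℝ) (hk0 : 0 ≤ k) (hkc : k < c)
    (hess : ∀ ε > (0:ℝ), ∃ T : ℝ,
      ∀ᵐ t ∂(volume : Measure ℝ), T ≤ t → |(-(g' t) / g t) - k| < ε) :
    Tendsto (fun t => ema c g t / g t) atTop (nhds (c / (c - k))) := by
  have hg'int2 : ∀ a b : ℝ, IntervalIntegrable g' volume a b :=
    fun a b => ((hg'int a).symm.trans (hg'int b))
  have hgcont : ContinuousOn g (Ici 0) := by
    apply ((continuous_const.add (intervalIntegral.continuous_primitive hg'int2 0)).continuousOn
      (s := Ici 0)).congr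
    intro t ht
    have h := hAC 0 t le_rfl ht
    simp only [Pi.add_apply]
    linarith
  have hgint : ∀ a b : ℝ, 0 ≤ a → 0 ≤ b → IntervalIntegrable g volume a b := by
    intro a b ha hb
    refine (hgcont.mono ?_).intervalIntegrable
    intro x hx
    have := hx.1
    simp only [mem_Ici]
    rcases le_total a b with h | h
    · rw [uIcc_of_le h] at hx; exact ha.trans hx.1
    · rw [uIcc_of_ge h] at hx; exact hb.trans hx.1
  have hck : 0 < c - k := by linarith
  rw [Metric.tendsto_nhds]
  intro ε hε
  set δ := min ((c - k) / 2) (ε * (c - k) ^ 2 / (6 * c)) with hδdef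
  have hδpos : 0 < δ := lt_min (by linarith) (by positivity)
  have hδ1 : δ ≤ (c - k) / 2 := min_le_left _ _
  have hδ2 : δ ≤ ε * (c - k) ^ 2 / (6 * c) := min_le_right _ _
  obtain ⟨T₀, hT₀⟩ := hess δ hδpos
  set T := max T₀ 0 with hTdef
  have hT0 : (0:ℝ) ≤ T := le_max_right _ _
  set a₁ := c - k - δ with ha₁def
  set a₂ := c - k + δ with ha₂def
  have ha₁ : 0 < a₁ := by rw [ha₁def]; linarith
  have ha₂ : 0 < a₂ := by rw [ha₂def]; linarith
  -- a.e. sign conditions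
  have hub : ∀ᵐ u ∂(volume : Measure ℝ), T ≤ u →
      0 ≤ (g' u + (k + δ) * g u) * Real.exp ((k + δ) * u) := by
    filter_upwards [hT₀] with u h1 hu
    have hu0 : (0:ℝ) ≤ u := hT0.trans hu
    have h2 := h1 ((le_max_left T₀ 0).trans hu)
    rw [abs_lt] at h2
    have h3 : -(g' u) / g u < k + δ := by linarith [h2.2]
    rw [div_lt_iff₀ (hgpos u hu0)] at h3
    have : 0 ≤ g' u + (k + δ) * g u := by linarith
    exact mul_nonneg this (Real.exp_pos _).le
  have hlb : ∀ᵐ u ∂(volume : Measure ℝ), T ≤ u →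
      (g' u + (k - δ) * g u) * Real.exp ((k - δ) * u) ≤ 0 := by
    filter_upwards [hT₀] with u h1 hu
    have hu0 : (0:ℝ) ≤ u := hT0.trans hu
    have h2 := h1 ((le_max_left T₀ 0).trans hu)
    rw [abs_lt] at h2
    have h3 : k - δ < -(g' u) / g u := by linarith [h2.1]
    rw [lt_div_iff₀ (hgpos u hu0)] at h3
    have : g' u + (k - δ) * g u ≤ 0 := by linarith
    exact mul_nonpos_of_nonpos_of_nonneg this (Real.exp_pos _).le
  -- monotone bounds
  have mono1 : ∀ s t : ℝ, T ≤ s → s ≤ t →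
      g s * Real.exp ((k + δ) * s) ≤ g t * Real.exp ((k + δ) * t) := by
    intro s t hs hst
    have hs0 : (0:ℝ) ≤ s := hT0.trans hs
    have hibp := ibp g g' hg'int2 hAC (k + δ) s t hs0 hst (hgint s t hs0 (hs0.trans hst))
    have hnn : 0 ≤ ∫ u in s..t, (g' u + (k + δ) * g u) * Real.exp ((k + δ) * u) := by
      apply intervalIntegral.integral_nonneg_of_ae_restrict hst
      filter_upwards [ae_restrict_of_ae hub, ae_restrict_mem measurableSet_Icc] with u h1 h2
      exact h1 (hs.trans h2.1)
    linarith [hibp ▸ hnn]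
  have mono2 : ∀ s t : ℝ, T ≤ s → s ≤ t →
      g t * Real.exp ((k - δ) * t) ≤ g s * Real.exp ((k - δ) * s) := by
    intro s t hs hst
    have hs0 : (0:ℝ) ≤ s := hT0.trans hs
    have hibp := ibp g g' hg'int2 hAC (k - δ) s t hs0 hst (hgint s t hs0 (hs0.trans hst))
    have hnp : (∫ u in s..t, (g' u + (k - δ) * g u) * Real.exp ((k - δ) * u)) ≤ 0 := by
      have : 0 ≤ ∫ u in s..t, -((g' u + (k - δ) * g u) * Real.exp ((k - δ) * u)) := by
        apply intervalIntegral.integral_nonneg_of_ae_restrict hst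
        filter_upwards [ae_restrict_of_ae hlb, ae_restrict_mem measurableSet_Icc] with u h1 h2
        simpa using h1 (hs.trans h2.1)
      rw [intervalIntegral.integral_neg] at this
      linarith
    linarith [hibp ▸ hnp]
  -- ratio bounds
  have R1 : ∀ s t : ℝ, T ≤ s → s ≤ t → g s ≤ g t * Real.exp ((k + δ) * (t - s)) := by
    intro s t hs hst
    have h := mono1 s t hs hst
    have he : Real.exp ((k + δ) * t) = Real.exp ((k + δ) * (t - s)) * Real.exp ((k + δ) * s) := by
      rw [← Real.exp_add]; ring_nf
    rw [he, ← mul_assoc] at h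
    exact le_of_mul_le_mul_right h (Real.exp_pos _)
  have R2 : ∀ s t : ℝ, T ≤ s → s ≤ t → g t * Real.exp ((k - δ) * (t - s)) ≤ g s := by
    intro s t hs hst
    have h := mono2 s t hs hst
    have he : Real.exp ((k - δ) * t) = Real.exp ((k - δ) * (t - s)) * Real.exp ((k - δ) * s) := by
      rw [← Real.exp_add]; ring_nf
    rw [he, ← mul_assoc] at h
    exact le_of_mul_le_mul_right h (Real.exp_pos _)
  -- constants and eventual bounds
  set K := ema c g T with hKdef
  have hgT : 0 < g T := hgpos T hT0
  have hKnn : 0 ≤ K := by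
    rw [hKdef]
    unfold ema
    apply intervalIntegral.integral_nonneg hT0
    intro u hu
    have hgu := (hgpos u hu.1).le
    positivity
  set B := K / g T + c / a₂ + 1 with hBdef
  have hBK : K / g T ≤ B := by
    have h1 : 0 < c / a₂ := div_pos hc ha₂
    rw [hBdef]; linarith
  have hBc : c / a₂ ≤ B := by
    have h1 : 0 ≤ K / g T := div_nonneg hKnn hgT.le
    rw [hBdef]; linarith
  have hevgen : ∀ aa : ℝ, 0 < aa →
      ∀ᶠ t in atTop, B * Real.exp (-aa * (t - T)) < ε / 3 := by
    intro aa haa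
    have h1 : Tendsto (fun t : ℝ => t - T) atTop atTop :=
      tendsto_atTop_add_const_right _ _ tendsto_id
    have h2 : Tendsto (fun t : ℝ => -aa * (t - T)) atTop atBot :=
      Tendsto.const_mul_atTop_of_neg (by linarith) h1
    have h3 : Tendsto (fun t : ℝ => B * Real.exp (-aa * (t - T))) atTop (nhds (B * 0)) :=
      (Real.tendsto_exp_atBot.comp h2).const_mul B
    rw [mul_zero] at h3
    exact h3.eventually_lt_const (by linarith)
  -- δ bounds
  have h11 : c * δ ≤ ε * (c - k) ^ 2 / 6 := by
    have h1 := mul_le_mul_of_nonneg_left hδ2 hc.le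
    have h12 : c * (ε * (c - k) ^ 2 / (6 * c)) = ε * (c - k) ^ 2 / 6 := by
      field_simp
    linarith
  have keyδ1 : c / a₁ ≤ c / (c - k) + ε / 3 := by
    have h10 : c / a₁ - c / (c - k) = c * δ / (a₁ * (c - k)) := by
      field_simp
      ring
    have h14 : c * δ / (a₁ * (c - k)) ≤ ε / 3 := by
      rw [div_le_iff₀ (by positivity)]
      have h13 : (c - k) / 2 * (c - k) ≤ a₁ * (c - k) :=
        mul_le_mul_of_nonneg_right (by rw [ha₁def]; linarith) hck.le
      nlinarith [mul_le_mul_of_nonneg_left h13 (by linarith : (0:ℝ) ≤ ε / 3)]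
    linarith
  have keyδ2 : c / (c - k) - ε / 3 ≤ c / a₂ := by
    have h10 : c / (c - k) - c / a₂ = c * δ / ((c - k) * a₂) := by
      field_simp
      ring
    have h14 : c * δ / ((c - k) * a₂) ≤ ε / 3 := by
      rw [div_le_iff₀ (by positivity)]
      have h13 : (c - k) * (c - k) ≤ (c - k) * a₂ :=
        mul_le_mul_of_nonneg_left (by rw [ha₂def]; linarith) hck.le
      nlinarith [mul_le_mul_of_nonneg_left h13 (by linarith : (0:ℝ) ≤ ε / 3)]
    linarith
  -- main eventual estimate
  filter_upwards [hevgen a₁ ha₁, hevgen a₂ ha₂, eventually_ge_atTop T] with t he1 he2 htT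
  have ht0 : (0:ℝ) ≤ t := hT0.trans htT
  have hgt : 0 < g t := hgpos t ht0
  have hfi : ∀ u v : ℝ, 0 ≤ u → 0 ≤ v →
      IntervalIntegrable (fun s => c * Real.exp (-c * (t - s)) * g s) volume u v := by
    intro u v hu hv
    exact (hgint u v hu hv).continuousOn_mul
      (Continuous.continuousOn (by fun_prop))
  have split : ema c g t = (∫ s in (0:ℝ)..T, c * Real.exp (-c * (t - s)) * g s)
      + ∫ s in T..t, c * Real.exp (-c * (t - s)) * g s := by
    unfold ema
    exact (intervalIntegral.integral_add_adjacent_intervals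
      (hfi 0 T le_rfl hT0) (hfi T t hT0 ht0)).symm
  set P1 := ∫ s in (0:ℝ)..T, c * Real.exp (-c * (t - s)) * g s with hP1def
  set P2 := ∫ s in T..t, c * Real.exp (-c * (t - s)) * g s with hP2def
  have hP1 : P1 = Real.exp (-c * (t - T)) * K := by
    rw [hP1def, hKdef]
    unfold ema
    rw [← intervalIntegral.integral_const_mul]
    have hcongr : ∀ s : ℝ, c * Real.exp (-c * (t - s)) * g s
        = Real.exp (-c * (t - T)) * (c * Real.exp (-c * (T - s)) * g s) := by
      intro s
      rw [show Real.exp (-c * (t - s)) = Real.exp (-c * (t - T)) * Real.exp (-c * (T - s)) by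
        rw [← Real.exp_add]; congr 1; ring]
      ring
    exact intervalIntegral.integral_congr fun s _ => hcongr s
  have hP1nn : 0 ≤ P1 := by
    rw [hP1]
    exact mul_nonneg (Real.exp_pos _).le hKnn
  have hgtlow : g T / Real.exp ((k + δ) * (t - T)) ≤ g t :=
    (div_le_iff₀ (Real.exp_pos _)).2 (R1 T t le_rfl htT)
  have hp1r : P1 / g t ≤ K / g T * Real.exp (-a₁ * (t - T)) := by
    rw [hP1]
    have h5 : Real.exp (-c * (t - T)) * K / g t
        ≤ Real.exp (-c * (t - T)) * K / (g T / Real.exp ((k + δ) * (t - T))) :=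
      div_le_div_of_nonneg_left (mul_nonneg (Real.exp_pos _).le hKnn)
        (div_pos hgT (Real.exp_pos _)) hgtlow
    have h6 : Real.exp (-c * (t - T)) * K / (g T / Real.exp ((k + δ) * (t - T)))
        = K / g T * Real.exp (-a₁ * (t - T)) := by
      rw [show Real.exp (-a₁ * (t - T))
          = Real.exp (-c * (t - T)) * Real.exp ((k + δ) * (t - T)) by
        rw [← Real.exp_add]; congr 1; rw [ha₁def]; ring]
      field_simp
    exact h6 ▸ h5
  have hup : ∀ s ∈ Icc T t,
      c * Real.exp (-c * (t - s)) * g s ≤ g t * (c * Real.exp (-a₁ * (t - s))) := by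
    intro s hs
    have h7 := R1 s t hs.1 hs.2
    have h8 : (0:ℝ) ≤ c * Real.exp (-c * (t - s)) := by positivity
    calc c * Real.exp (-c * (t - s)) * g s
        ≤ c * Real.exp (-c * (t - s)) * (g t * Real.exp ((k + δ) * (t - s))) :=
          mul_le_mul_of_nonneg_left h7 h8
      _ = g t * (c * Real.exp (-a₁ * (t - s))) := by
          rw [show Real.exp (-a₁ * (t - s))
              = Real.exp (-c * (t - s)) * Real.exp ((k + δ) * (t - s)) by
            rw [← Real.exp_add]; congr 1; rw [ha₁def]; ring]
          ring
  have hdn : ∀ s ∈ Icc T t,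
      g t * (c * Real.exp (-a₂ * (t - s))) ≤ c * Real.exp (-c * (t - s)) * g s := by
    intro s hs
    have h7 := R2 s t hs.1 hs.2
    have h8 : (0:ℝ) ≤ c * Real.exp (-c * (t - s)) := by positivity
    calc g t * (c * Real.exp (-a₂ * (t - s)))
        = c * Real.exp (-c * (t - s)) * (g t * Real.exp ((k - δ) * (t - s))) := by
          rw [show Real.exp (-a₂ * (t - s))
              = Real.exp (-c * (t - s)) * Real.exp ((k - δ) * (t - s)) by
            rw [← Real.exp_add]; congr 1; rw [ha₂def]; ring]
          ring
      _ ≤ c * Real.exp (-c * (t - s)) * g s := mul_le_mul_of_nonneg_left h7 h8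
  have hP2up : P2 ≤ g t * (c / a₁) := by
    have h9 : P2 ≤ ∫ s in T..t, g t * (c * Real.exp (-a₁ * (t - s))) :=
      intervalIntegral.integral_mono_on htT (hfi T t hT0 ht0)
        (Continuous.intervalIntegrable (by fun_prop) T t) hup
    have h10 : (∫ s in T..t, g t * (c * Real.exp (-a₁ * (t - s))))
        = g t * (c / a₁ * (1 - Real.exp (-a₁ * (t - T)))) := by
      rw [intervalIntegral.integral_const_mul, expInt a₁ c T t ha₁]
    have h12 : c / a₁ * (1 - Real.exp (-a₁ * (t - T))) ≤ c / a₁ := by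
      have h13 : (0:ℝ) < c / a₁ := div_pos hc ha₁
      nlinarith [(Real.exp_pos (-a₁ * (t - T))).le]
    calc P2 ≤ g t * (c / a₁ * (1 - Real.exp (-a₁ * (t - T)))) := by rw [← h10]; exact h9
      _ ≤ g t * (c / a₁) := mul_le_mul_of_nonneg_left h12 hgt.le
  have hP2dn : g t * (c / a₂ * (1 - Real.exp (-a₂ * (t - T)))) ≤ P2 := by
    have h9 : (∫ s in T..t, g t * (c * Real.exp (-a₂ * (t - s)))) ≤ P2 :=
      intervalIntegral.integral_mono_on htT
        (Continuous.intervalIntegrable (by fun_prop) T t) (hfi T t hT0 ht0) hdn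
    have h10 : (∫ s in T..t, g t * (c * Real.exp (-a₂ * (t - s))))
        = g t * (c / a₂ * (1 - Real.exp (-a₂ * (t - T)))) := by
      rw [intervalIntegral.integral_const_mul, expInt a₂ c T t ha₂]
    rw [← h10]; exact h9
  have hratio : ema c g t / g t = P1 / g t + P2 / g t := by rw [split, add_div]
  have hP2r_up : P2 / g t ≤ c / a₁ := (div_le_iff₀ hgt).2 (by linarith)
  have hP2r_dn : c / a₂ * (1 - Real.exp (-a₂ * (t - T))) ≤ P2 / g t :=
    (le_div_iff₀ hgt).2 (by linarith)
  have hP1r_nn : 0 ≤ P1 / g t := div_nonneg hP1nn hgt.le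
  have hBe1 : K / g T * Real.exp (-a₁ * (t - T)) ≤ B * Real.exp (-a₁ * (t - T)) :=
    mul_le_mul_of_nonneg_right hBK (Real.exp_pos _).le
  have hBe2 : c / a₂ * Real.exp (-a₂ * (t - T)) ≤ B * Real.exp (-a₂ * (t - T)) :=
    mul_le_mul_of_nonneg_right hBc (Real.exp_pos _).le
  have hexpand : c / a₂ * (1 - Real.exp (-a₂ * (t - T)))
      = c / a₂ - c / a₂ * Real.exp (-a₂ * (t - T)) := by ring
  rw [Real.dist_eq, abs_lt]
  constructor
  · linarith
  · linarith
end
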